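/- arXiv:math/0702346 — 4 statements merged into one kernel-verified Lean document; each statement's English description precedes it below -/
import Mathlib

section
/- Let M be a finite abelian 2-group and m ∈ M an element of order 2. Then M is isomorphic to a direct product of nontrivial cyclic groups, one of which contains m. -/
/-!
Write `M ≃+ ⨁ j, ZMod (2 ^ aⱼ)`. Since `2 • m = 0`, every coordinate `cⱼ` of `m` is `0` or
`2 ^ aⱼ / 2`. Choose `i` with `cᵢ ≠ 0` and `aᵢ` minimal among the nonzero coordinates, and let `d`
have coordinates `2 ^ aⱼ / 2 ^ aᵢ` where `cⱼ ≠ 0` and `0` elsewhere. Then `dᵢ = 1`,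
`2 ^ aᵢ • d = 0` and `(2 ^ aᵢ / 2) • d = m`. The shear `x ↦ x + xᵢ • (d - eᵢ)` is an automorphism
sending the `i`-th generator `eᵢ` to `d`, so the image of the `i`-th summand under it contains `m`.
-/

open DirectSum

theorem ZMod.range_addMonoidHom_eq_zmultiples {n : ℕ} {M : Type*} [AddGroup M]
    (f : ZMod n →+ M) : f.range = AddSubgroup.zmultiples (f 1) := by
  ext x
  constructor
  · rintro ⟨z, rfl⟩
    exact ⟨z.cast, by dsimp only; rw [← map_zsmul, zsmul_one, ZMod.intCast_zmod_cast]⟩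
  · rintro ⟨k, rfl⟩
    exact ⟨k, by dsimp only; rw [← map_zsmul, zsmul_one]⟩

theorem ZMod.two_dvd_and_eq_half_of_two_nsmul_eq_zero {n : ℕ} {z : ZMod n} (h : 2 • z = 0)
    (hz : z ≠ 0) : 2 ∣ n ∧ z = ((n / 2 : ℕ) : ZMod n) := by
  rcases n with _ | n
  · exact absurd (by simpa using h) hz
  · have hval := ZMod.natCast_zmod_val z
    obtain ⟨t, ht⟩ : n + 1 ∣ 2 * z.val := by
      rw [← ZMod.natCast_eq_zero_iff, Nat.cast_mul, hval, ← nsmul_eq_mul, h]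
    have hlt := z.val_lt
    have hne := (ZMod.val_ne_zero z).mpr hz
    obtain rfl : t = 1 := by
      have : t < 2 := by nlinarith
      interval_cases t <;> omega
    refine ⟨⟨z.val, by omega⟩, ?_⟩
    rw [← hval]
    congr
    omega

@[simps]
def AddEquiv.addSelfOfSquareZero {A : Type*} [AddCommGroup A] (f : A →+ A)
    (hf : ∀ x, f (f x) = 0) : A ≃+ A where
  toFun x := x + f x
  invFun x := x - f x
  left_inv x := by simp [hf]
  right_inv x := by simp [hf]
  map_add' x y := by simp only [map_add]; abel

namespace DirectSum

variable {ι : Type*} [DecidableEq ι]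

theorem isInternal_range_comp_of {β : ι → Type*} [∀ i, AddCommGroup (β i)] {M : Type*}
    [AddCommGroup M] (φ : (⨁ i, β i) ≃+ M) :
    IsInternal fun i => ((φ : (⨁ i, β i) →+ M).comp (of β i)).range := by
  let f i := ((φ : (⨁ i, β i) →+ M).comp (of β i)).rangeRestrict
  have hf : (DirectSum.coeAddMonoidHom _).comp (map f) = φ :=
    addHom_ext fun i x => by simp [f]
  have hbij : Function.Bijective (map f) :=
    ⟨(map_injective f).mpr fun i => AddMonoidHom.rangeRestrict_injective_iff.mpr
      (φ.injective.comp (of_injective i)),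
     (map_surjective f).mpr fun i => AddMonoidHom.rangeRestrict_surjective _⟩
  exact (Function.Bijective.of_comp_iff _ hbij).mp
    (by rw [← AddMonoidHom.coe_comp, hf]; exact φ.bijective)

variable {ν : ι → ℕ}

theorem exists_addEquiv_of_apply_eq_one {i : ι} {d : ⨁ j, ZMod (ν j)} (hd : d i = 1)
    (hνd : ν i • d = 0) :
    ∃ σ : (⨁ j, ZMod (ν j)) ≃+ ⨁ j, ZMod (ν j), σ (of _ i 1) = d := by
  set x := d - of _ i 1
  have hx : x i = 0 := by simp [x, hd]
  have hνx : (ν i : ℤ) • x = 0 := by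
    rw [natCast_zsmul, smul_sub, hνd, ← map_nsmul, nsmul_one, ZMod.natCast_self, map_zero,
      sub_zero]
  let h : ZMod (ν i) →+ ⨁ j, ZMod (ν j) := ZMod.lift (ν i) ⟨zmultiplesHom _ x, hνx⟩
  have h1 : h 1 = x := by simpa using ZMod.lift_coe (ν i) ⟨zmultiplesHom _ x, hνx⟩ 1
  have hhi (z : ZMod (ν i)) : h z i = 0 := by
    obtain ⟨k, hk⟩ : h z ∈ AddSubgroup.zmultiples x :=
      h1 ▸ ZMod.range_addMonoidHom_eq_zmultiples h ▸ ⟨z, rfl⟩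
    rw [← hk, DFinsupp.zsmul_apply, hx, smul_zero]
  let f := h.comp (DFinsupp.evalAddMonoidHom (β := fun j => ZMod (ν j)) i)
  have hf (y : ⨁ j, ZMod (ν j)) : f y = h (y i) := rfl
  exact ⟨AddEquiv.addSelfOfSquareZero f fun y => by rw [hf, hf, hhi, map_zero],
    by simp [hf, h1, x]⟩

theorem exists_addEquiv_of_half_eq_of_two_nsmul_eq_zero {c : ⨁ j, ZMod (ν j)} (hc : 2 • c = 0)
    {i : ι} (hci : c i ≠ 0) (hdvd : ∀ j, c j ≠ 0 → ν i ∣ ν j) :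
    ∃ σ : (⨁ j, ZMod (ν j)) ≃+ ⨁ j, ZMod (ν j), σ (of _ i (ν i / 2 : ℕ)) = c := by
  have hhalf (j : ι) (hj : c j ≠ 0) : 2 ∣ ν j ∧ c j = ((ν j / 2 : ℕ) : ZMod (ν j)) :=
    ZMod.two_dvd_and_eq_half_of_two_nsmul_eq_zero
      (by rw [← DFinsupp.nsmul_apply, hc, zero_apply]) hj
  have hνi : 0 < ν i := Nat.pos_of_ne_zero fun h0 => hci (by simp [(hhalf i hci).2, h0])
  let d : ⨁ j, ZMod (ν j) :=
    DFinsupp.mapRange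
      (fun j (z : ZMod (ν j)) => if z = 0 then 0 else ((ν j / ν i : ℕ) : ZMod (ν j)))
      (fun j => if_pos rfl) c
  have hd (j : ι) : d j = if c j = 0 then 0 else ((ν j / ν i : ℕ) : ZMod (ν j)) :=
    DFinsupp.mapRange_apply _ _ c j
  obtain ⟨σ, hσ⟩ := exists_addEquiv_of_apply_eq_one (d := d) (i := i)
    (by simp [hd, hci, Nat.div_self hνi]) <| by
      ext j
      rw [DFinsupp.nsmul_apply, hd, zero_apply]
      split_ifs with hj
      · exact smul_zero _
      · rw [nsmul_eq_mul, ← Nat.cast_mul, Nat.mul_div_cancel' (hdvd j hj), ZMod.natCast_self]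
  refine ⟨σ, ?_⟩
  rw [← nsmul_one, map_nsmul, map_nsmul, hσ]
  ext j
  rw [DFinsupp.nsmul_apply, hd]
  split_ifs with hj
  · rw [smul_zero, hj]
  · rw [(hhalf j hj).2, nsmul_eq_mul, ← Nat.cast_mul,
      Nat.div_mul_div_comm (hhalf i hci).1 (hdvd j hj), mul_comm 2, Nat.mul_div_mul_left _ _ hνi]

end DirectSum

theorem Finset.exists_mem_forall_dvd_of_forall_eq_pow {κ : Type*} {s : Finset κ}
    (hs : s.Nonempty) {μ : κ → ℕ} {p : ℕ} (hμ : ∀ j, ∃ a, μ j = p ^ a) :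
    ∃ i ∈ s, ∀ j ∈ s, μ i ∣ μ j := by
  choose a ha using hμ
  obtain ⟨i, hi, hmin⟩ := s.exists_min_image a hs
  exact ⟨i, hi, fun j hj => by rw [ha i, ha j]; exact pow_dvd_pow p (hmin j hj)⟩

theorem AddCommGroup.exists_addEquiv_directSum_zmod_of_card_eq_prime_pow {M : Type*}
    [AddCommGroup M] [Fintype M] {p k : ℕ} (hp : p.Prime) (hM : Fintype.card M = p ^ k) :
    ∃ (n : ℕ) (μ : Fin n → ℕ), (∀ j, 1 < μ j) ∧ (∀ j, ∃ a, μ j = p ^ a) ∧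
      Nonempty (M ≃+ ⨁ j, ZMod (μ j)) := by
  obtain ⟨κ, _, μ, hμ, ⟨e⟩⟩ := AddCommGroup.equiv_directSum_zmod_of_finite' M
  let q := Fintype.equivFin κ
  let e' := e.trans (DirectSum.equivCongrLeft q)
  refine ⟨_, fun j => μ (q.symm j), fun j => hμ _, fun j => ?_, ⟨e'⟩⟩
  have hdvd : μ (q.symm j) ∣ p ^ k := by
    let f := (e'.symm : (⨁ j, ZMod (μ (q.symm j))) →+ M).comp (of _ j)
    rw [← hM, ← ZMod.addOrderOf_one (μ (q.symm j)),
      ← addOrderOf_injective f (e'.symm.injective.comp (of_injective j))]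
    exact addOrderOf_dvd_card
  obtain ⟨a, -, ha⟩ := (Nat.dvd_prime_pow hp).mp hdvd
  exact ⟨a, ha⟩

/-- A finite abelian 2-group `M` with an element `m` of order 2 decomposes as an
internal direct sum of nontrivial cyclic subgroups, one of which contains `m`. -/
theorem finite_abelian_two_group_decomposition_with_element
    (M : Type*) [AddCommGroup M] [Fintype M]
    (hM : ∃ k : ℕ, Fintype.card M = 2 ^ k)
    (m : M) (hm : addOrderOf m = 2) :
    ∃ (n : ℕ) (H : Fin n → AddSubgroup M),
      DirectSum.IsInternal H ∧
      (∀ i, H i ≠ ⊥) ∧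
      (∀ i, ∃ g : M, H i = AddSubgroup.zmultiples g) ∧
      ∃ i, m ∈ H i := by
  obtain ⟨k, hcard⟩ := hM
  obtain ⟨n, μ, hμ1, hμ2, ⟨e⟩⟩ :=
    AddCommGroup.exists_addEquiv_directSum_zmod_of_card_eq_prime_pow Nat.prime_two hcard
  have hm2 : 2 • e m = 0 := by rw [← map_nsmul, ← hm, addOrderOf_nsmul_eq_zero, map_zero]
  have hm0 : e m ≠ 0 := by
    rw [Ne, e.map_eq_zero_iff]; rintro rfl; simp at hm
  obtain ⟨i, hi, hdvd⟩ := (e m).support.exists_mem_forall_dvd_of_forall_eq_pow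
    (Finset.nonempty_iff_ne_empty.mpr (DFinsupp.support_eq_empty.not.mpr hm0)) hμ2
  obtain ⟨σ, hσ⟩ := exists_addEquiv_of_half_eq_of_two_nsmul_eq_zero hm2
    (DFinsupp.mem_support_iff.mp hi) fun j hj => hdvd j (DFinsupp.mem_support_iff.mpr hj)
  let Ψ := σ.trans e.symm
  let f (j : Fin n) : ZMod (μ j) →+ M :=
    (Ψ : (⨁ j, ZMod (μ j)) →+ M).comp (of (fun j => ZMod (μ j)) j)
  refine ⟨n, fun j => (f j).range, isInternal_range_comp_of Ψ, fun j => ?_,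
    fun j => ⟨f j 1, ZMod.range_addMonoidHom_eq_zmultiples (f j)⟩, i, (μ i / 2 : ℕ),
    by simp [f, Ψ, hσ]⟩
  have : Fact (1 < μ j) := ⟨hμ1 j⟩
  rw [Ne, AddMonoidHom.range_eq_bot_iff]
  intro h
  exact one_ne_zero <| Ψ.injective.comp (of_injective j) <|
    (DFunLike.congr_fun h 1).trans (map_zero (f j)).symm
end

section
/- A finitely generated projective module of constant rank n over a commutative semilocal ring is free of rank n. -/
/-!
Over a maximal ideal `𝔪` the fibre `(A ⧸ 𝔪) ⊗ P` has dimension the rank of `P_𝔪`, that is `n`.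
Lifting bases of all these finitely many fibres simultaneously by the Chinese remainder theorem
gives `n` elements of `P` which, by Nakayama, generate every `P_𝔪` and hence form a basis of `P`
(`Module.nonempty_basis_of_flat_of_finrank_eq`).
-/

open TensorProduct Module

theorem Ideal.finrank_quotient_tensorProduct_eq_rankAtStalk {R : Type*} [CommRing R]
    (M : Type*) [AddCommGroup M] [Module R M] [Module.Finite R M] [Flat R M]
    (P : Ideal R) [hP : P.IsMaximal] :
    finrank (R ⧸ P) ((R ⧸ P) ⊗[R] M) = rankAtStalk M ⟨P, hP.isPrime⟩ := by
  let := Ideal.Quotient.field P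
  rw [← P.finrank_fiber_eq_rankAtStalk,
    ← (AlgebraTensorModule.cancelBaseChange R (R ⧸ P) P.ResidueField P.ResidueField M).finrank_eq,
    finrank_baseChange (R := P.ResidueField) (S := R ⧸ P)]

theorem MaximalSpectrum.finite_of_finite_setOf_isMaximal {R : Type*} [CommSemiring R]
    (h : {I : Ideal R | I.IsMaximal}.Finite) : Finite (MaximalSpectrum R) :=
  have : Finite {I : Ideal R // I.IsMaximal} := h.to_subtype
  .of_equiv _ (MaximalSpectrum.equivSubtype R).symm

/-- A finitely generated projective module of constant rank `n` over a
commutative semilocal ring (finitely many maximal ideals) is free of rank `n`: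
if the localization of `P` at every prime ideal is free of rank `n`, then
`P ≅ Aⁿ`. -/
theorem projective_constant_rank_free_of_semilocal
    (A : Type*) [CommRing A] (hsl : {I : Ideal A | I.IsMaximal}.Finite)
    (P : Type*) [AddCommGroup P] [Module A P]
    [Module.Finite A P] [Module.Projective A P] (n : ℕ)
    (hrank : ∀ (Q : Ideal A) (hQ : Q.IsPrime),
      Nonempty (Module.Basis (Fin n) (Localization (@Ideal.primeCompl A _ Q hQ))
        (LocalizedModule (@Ideal.primeCompl A _ Q hQ) P))) :
    Nonempty (Module.Basis (Fin n) A P) := by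
  have := MaximalSpectrum.finite_of_finite_setOf_isMaximal hsl
  refine nonempty_basis_of_flat_of_finrank_eq A P n fun Q => ?_
  have := Q.isMaximal
  obtain ⟨b⟩ := hrank Q.asIdeal Q.isMaximal.isPrime
  rw [Ideal.finrank_quotient_tensorProduct_eq_rankAtStalk P Q.asIdeal, rankAtStalk,
    finrank_eq_card_basis b, Fintype.card_fin]
end

section
/- Let G = ⟨τ⟩ have order 2, R₂ = Z_(2)[G] ⊂ S₂ = Z_(2)e⁺ ⊕ Z_(2)e⁻ with e^± = (1±τ)/2. If I is an ideal of R₂ of finite index and α ∈ S₂ generates the extended ideal I·S₂ (which is principal since S₂ ≅ Z_(2) × Z_(2)), then α can be chosen to lie in I; more precisely, any generator of I·S₂ of the form 2^i e⁺ + 2^j e⁻ lies in I. -/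
/-- The group `G` of order two. -/
abbrev Gtwo := Multiplicative (ZMod 2)
/-- The nontrivial element `τ` inside the group algebra `ℚ[G]`. -/
noncomputable def tauQ : MonoidAlgebra ℚ Gtwo :=
  MonoidAlgebra.of ℚ Gtwo (Multiplicative.ofAdd 1)

/-- The idempotent `e⁺ = (1+τ)/2` of `ℚ[G]`. -/
noncomputable def eplus : MonoidAlgebra ℚ Gtwo := (2 : ℚ)⁻¹ • (1 + tauQ)

/-- The idempotent `e⁻ = (1-τ)/2` of `ℚ[G]`. -/
noncomputable def eminus : MonoidAlgebra ℚ Gtwo := (2 : ℚ)⁻¹ • (1 - tauQ)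

/-- The localization `ℤ_(2)` of `ℤ` at 2, realized as the subring of `ℚ`
generated by the inverses of odd integers. -/
def Zloc : Subring ℚ := Subring.closure {q : ℚ | ∃ n : ℤ, ¬(2 ∣ n) ∧ q * n = 1}

/-- `R₂ = ℤ_(2)[G] = ℤ_(2)·1 ⊕ ℤ_(2)·τ`, as a subring of `ℚ[G]`. -/
noncomputable def RtwoSub : Subring (MonoidAlgebra ℚ Gtwo) :=
  Subring.closure
    {x | ∃ a b : ℚ, a ∈ Zloc ∧ b ∈ Zloc ∧ x = a • (1 : MonoidAlgebra ℚ Gtwo) + b • tauQ}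

/-- `S₂ = ℤ_(2)·(1+τ)/2 ⊕ ℤ_(2)·(1-τ)/2`, the maximal order in `ℚ[G]`
localized at 2, as a subring of `ℚ[G]`. -/
noncomputable def StwoSub : Subring (MonoidAlgebra ℚ Gtwo) :=
  Subring.closure {x | ∃ a b : ℚ, a ∈ Zloc ∧ b ∈ Zloc ∧ x = a • eplus + b • eminus}

noncomputable abbrev Amb := MonoidAlgebra ℚ Gtwo
noncomputable abbrev CC : ℚ →+* Amb := algebraMap ℚ Amb
lemma ht : tauQ * tauQ = 1 := by
  rw [tauQ, ← map_mul]
  have : (Multiplicative.ofAdd (1 : ZMod 2)) * (Multiplicative.ofAdd 1) = 1 := by decide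
  rw [this, map_one]
lemma hsm (q : ℚ) (x : Amb) : q • x = CC q * x := Algebra.smul_def q x
lemma h2 : CC 2 = 2 := map_ofNat _ 2
lemma hhalf : CC 2⁻¹ * 2 = 1 := by
  rw [← h2, ← map_mul, show (2⁻¹*2 : ℚ) = 1 by norm_num, map_one]
lemma hep : eplus = CC 2⁻¹ * (1 + tauQ) := hsm _ _
lemma hem : eminus = CC 2⁻¹ * (1 - tauQ) := hsm _ _
lemma h1 : eplus + eminus = 1 := by rw [hep, hem]; linear_combination hhalf
lemma hpp : eplus * eplus = eplus := by
  rw [hep]; linear_combination (CC 2⁻¹ * CC 2⁻¹) * ht + (CC 2⁻¹ * (1+tauQ)) * hhalf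
lemma hmm : eminus * eminus = eminus := by
  rw [hem]; linear_combination (CC 2⁻¹ * CC 2⁻¹) * ht + (CC 2⁻¹ * (1-tauQ)) * hhalf
lemma hpm : eplus * eminus = 0 := by
  rw [hep, hem]; linear_combination (-(CC 2⁻¹ * CC 2⁻¹)) * ht
lemma hpt : eplus * tauQ = eplus := by
  rw [hep]; linear_combination (CC 2⁻¹) * ht
lemma hmt : eminus * tauQ = -eminus := by
  rw [hem]; linear_combination (-(CC 2⁻¹)) * ht
lemma twop : (2:Amb) * eplus = 1 + tauQ := by
  rw [hep]; linear_combination (1+tauQ) * hhalf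
lemma twom : (2:Amb) * eminus = 1 - tauQ := by
  rw [hem]; linear_combination (1-tauQ) * hhalf

def ZlocSet : Subring ℚ where
  carrier := {q : ℚ | ∃ m n : ℤ, Odd n ∧ q * n = m}
  one_mem' := ⟨1, 1, odd_one, by norm_num⟩
  zero_mem' := ⟨0, 1, odd_one, by norm_num⟩
  add_mem' := by
    rintro a b ⟨m, n, hn, h⟩ ⟨m', n', hn', h'⟩
    refine ⟨m * n' + m' * n, n * n', hn.mul hn', ?_⟩
    push_cast
    linear_combination (n':ℚ) * h + (n:ℚ) * h'
  mul_mem' := by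
    rintro a b ⟨m, n, hn, h⟩ ⟨m', n', hn', h'⟩
    refine ⟨m * m', n * n', hn.mul hn', ?_⟩
    push_cast
    linear_combination (b * (n':ℚ)) * h + (m:ℚ) * h'
  neg_mem' := by
    rintro a ⟨m, n, hn, h⟩
    exact ⟨-m, n, hn, by push_cast; linear_combination -h⟩

lemma mem_ZlocSet_iff (q : ℚ) : q ∈ ZlocSet ↔ ∃ m n : ℤ, Odd n ∧ q * n = m :=
  ⟨fun h => h, fun h => h⟩

lemma Zloc_eq : Zloc = ZlocSet := by
  apply le_antisymm
  · rw [Zloc]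
    apply Subring.closure_le.mpr
    rintro q ⟨n, hn, h⟩
    exact (mem_ZlocSet_iff q).mpr ⟨1, n, Int.odd_iff.mpr (by omega), by push_cast; linear_combination h⟩
  · intro q hq
    obtain ⟨m, n, hn, h⟩ := (mem_ZlocSet_iff q).mp hq
    have hn0 : (n:ℚ) ≠ 0 := Int.cast_ne_zero.mpr (by rintro rfl; simp at hn)
    have hinv : ((n:ℚ)⁻¹) ∈ Zloc := by
      apply Subring.subset_closure
      exact ⟨n, by obtain ⟨l, hl⟩ := hn; omega, inv_mul_cancel₀ hn0⟩
    have : q = (m : ℚ) * (n:ℚ)⁻¹ := by field_simp; linear_combination h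
    rw [this]
    exact Zloc.mul_mem (intCast_mem Zloc m) hinv

lemma mem_Zloc_iff (q : ℚ) : q ∈ Zloc ↔ ∃ m n : ℤ, Odd n ∧ q * n = m := by
  rw [Zloc_eq]; exact mem_ZlocSet_iff q

lemma Zloc_parity {q : ℚ} (h : q ∈ Zloc) :
    (∃ a ∈ Zloc, q = 2 * a) ∨ (∃ a ∈ Zloc, q = 1 + 2 * a) := by
  rw [mem_Zloc_iff] at h
  obtain ⟨m, n, hn, hq⟩ := h
  rcases Int.even_or_odd m with he | ho
  · left
    obtain ⟨k, hk⟩ := he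
    refine ⟨q / 2, (mem_Zloc_iff _).mpr ⟨k, n, hn, ?_⟩, by ring⟩
    have hm : (m : ℚ) = 2 * k := by rw [hk]; push_cast; ring
    linear_combination hq / 2 + hm / 2
  · right
    obtain ⟨k, hk⟩ := ho
    obtain ⟨l, hl⟩ := hn
    refine ⟨(q - 1) / 2, (mem_Zloc_iff _).mpr ⟨k - l, n, ⟨l, hl⟩, ?_⟩, by ring⟩
    have hm : (m : ℚ) = 2 * k + 1 := by rw [hk]; push_cast; ring
    have hnl : (n : ℚ) = 2 * l + 1 := by rw [hl]; push_cast; ring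
    push_cast
    linear_combination hq / 2 + hm / 2 - hnl / 2



noncomputable def RSet : Subring Amb where
  carrier := {x | ∃ a b : ℚ, a ∈ Zloc ∧ b ∈ Zloc ∧ x = a • (1 : Amb) + b • tauQ}
  one_mem' := ⟨1, 0, one_mem _, zero_mem _, by simp⟩
  zero_mem' := ⟨0, 0, zero_mem _, zero_mem _, by simp⟩
  add_mem' := by
    rintro x y ⟨a, b, ha, hb, rfl⟩ ⟨c, d, hc, hd, rfl⟩
    refine ⟨a + c, b + d, add_mem ha hc, add_mem hb hd, ?_⟩
    simp only [add_smul]; ring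
  neg_mem' := by
    rintro x ⟨a, b, ha, hb, rfl⟩
    exact ⟨-a, -b, neg_mem ha, neg_mem hb, by simp only [neg_smul]; ring⟩
  mul_mem' := by
    rintro x y ⟨a, b, ha, hb, rfl⟩ ⟨c, d, hc, hd, rfl⟩
    refine ⟨a * c + b * d, a * d + b * c,
      add_mem (mul_mem ha hc) (mul_mem hb hd),
      add_mem (mul_mem ha hd) (mul_mem hb hc), ?_⟩
    simp only [hsm, map_add, map_mul, mul_one]
    linear_combination (CC b * CC d) * ht

noncomputable def SSub : Subring Amb where
  carrier := {x | ∃ a b : ℚ, a ∈ Zloc ∧ b ∈ Zloc ∧ x = a • eplus + b • eminus}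
  one_mem' := ⟨1, 1, one_mem _, one_mem _, by simp only [one_smul]; exact h1.symm⟩
  zero_mem' := ⟨0, 0, zero_mem _, zero_mem _, by simp⟩
  add_mem' := by
    rintro x y ⟨a, b, ha, hb, rfl⟩ ⟨c, d, hc, hd, rfl⟩
    refine ⟨a + c, b + d, add_mem ha hc, add_mem hb hd, ?_⟩
    simp only [add_smul]; ring
  neg_mem' := by
    rintro x ⟨a, b, ha, hb, rfl⟩
    exact ⟨-a, -b, neg_mem ha, neg_mem hb, by simp only [neg_smul]; ring⟩
  mul_mem' := by
    rintro x y ⟨a, b, ha, hb, rfl⟩ ⟨c, d, hc, hd, rfl⟩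
    refine ⟨a * c, b * d, mul_mem ha hc, mul_mem hb hd, ?_⟩
    simp only [hsm, map_mul]
    linear_combination (CC a * CC c) * hpp + (CC b * CC d) * hmm +
      (CC a * CC d + CC b * CC c) * hpm

lemma mem_RSet_iff (x : Amb) :
    x ∈ RSet ↔ ∃ a b : ℚ, a ∈ Zloc ∧ b ∈ Zloc ∧ x = a • (1 : Amb) + b • tauQ :=
  ⟨fun h => h, fun h => h⟩

lemma mem_SSub_iff (x : Amb) :
    x ∈ SSub ↔ ∃ a b : ℚ, a ∈ Zloc ∧ b ∈ Zloc ∧ x = a • eplus + b • eminus :=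
  ⟨fun h => h, fun h => h⟩

lemma mem_RtwoSub_iff (x : Amb) :
    x ∈ RtwoSub ↔ ∃ a b : ℚ, a ∈ Zloc ∧ b ∈ Zloc ∧ x = a • (1 : Amb) + b • tauQ := by
  constructor
  · intro h
    exact (mem_RSet_iff x).mp
      (Subring.closure_le.mpr (fun y hy => (mem_RSet_iff y).mpr hy) h)
  · intro h
    exact Subring.subset_closure h

lemma mem_StwoSub_iff (x : Amb) :
    x ∈ StwoSub ↔ ∃ a b : ℚ, a ∈ Zloc ∧ b ∈ Zloc ∧ x = a • eplus + b • eminus := by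
  constructor
  · intro h
    exact (mem_SSub_iff x).mp
      (Subring.closure_le.mpr (fun y hy => (mem_SSub_iff y).mpr hy) h)
  · intro h
    exact Subring.subset_closure h

lemma hp1 : eplus * (1 + tauQ) = (2:Amb) * eplus := by
  linear_combination hpt
lemma hm1 : eminus * (1 + tauQ) = 0 := by
  linear_combination hmt
lemma hp2 : eplus * (1 - tauQ) = 0 := by
  linear_combination - hpt
lemma hm2 : eminus * (1 - tauQ) = (2:Amb) * eminus := by
  linear_combination - hmt

lemma pow2_mem_Zloc (i : ℕ) : ((2:ℚ)^i) ∈ Zloc := by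
  rw [mem_Zloc_iff]
  exact ⟨2^i, 1, odd_one, by push_cast; ring⟩

lemma scal_mem_RtwoSub {q : ℚ} (hq : q ∈ Zloc) : q • (1 : Amb) ∈ RtwoSub := by
  rw [mem_RtwoSub_iff]
  exact ⟨q, 0, hq, zero_mem _, by simp⟩

lemma s_decomp_plus (s : Amb) (hs : s ∈ StwoSub) :
    ∃ r c : Amb, r ∈ RtwoSub ∧ c ∈ RtwoSub ∧ s = r + c * eplus := by
  obtain ⟨a, b, ha, hb, rfl⟩ := (mem_StwoSub_iff s).mp hs
  refine ⟨b • 1, (a - b) • 1, scal_mem_RtwoSub hb, scal_mem_RtwoSub (sub_mem ha hb), ?_⟩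
  rw [smul_mul_assoc, one_mul, ← h1]
  module

lemma s_decomp_minus (s : Amb) (hs : s ∈ StwoSub) :
    ∃ r c : Amb, r ∈ RtwoSub ∧ c ∈ RtwoSub ∧ s = r + c * eminus := by
  obtain ⟨a, b, ha, hb, rfl⟩ := (mem_StwoSub_iff s).mp hs
  refine ⟨a • 1, (b - a) • 1, scal_mem_RtwoSub ha, scal_mem_RtwoSub (sub_mem hb ha), ?_⟩
  rw [smul_mul_assoc, one_mul, ← h1]
  module


lemma coe_incl_gen {R : Type*} [CommRing R] {A B : Subring R} (h : A ≤ B) (x : A) :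
    ((Subring.inclusion h x : B) : R) = (x : R) := rfl

lemma coe_incl (hRS : RtwoSub ≤ StwoSub) (x : RtwoSub) :
    ((Subring.inclusion hRS x : StwoSub) : Amb) = (x : Amb) := coe_incl_gen hRS x

lemma map_decomp (hRS : RtwoSub ≤ StwoSub) (I : Ideal RtwoSub)
    (e : Amb) (he : e * e = e)
    (hdec : ∀ s : Amb, s ∈ StwoSub → ∃ r c : Amb, r ∈ RtwoSub ∧ c ∈ RtwoSub ∧ s = r + c * e)
    (z : StwoSub) (hz : z ∈ Ideal.map (Subring.inclusion hRS) I) :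
    ∃ x y : RtwoSub, x ∈ I ∧ y ∈ I ∧ (z : Amb) = ↑y + ↑x * e := by
  have hz' : z ∈ Ideal.span ((Subring.inclusion hRS) '' ↑I) := hz
  clear hz
  induction hz' using Submodule.span_induction with
  | mem w hw =>
      obtain ⟨x₀, hx₀, rfl⟩ := hw
      refine ⟨0, x₀, I.zero_mem, hx₀, ?_⟩
      rw [coe_incl]
      simp only [ZeroMemClass.coe_zero, zero_mul, add_zero]
  | zero =>
      refine ⟨0, 0, I.zero_mem, I.zero_mem, ?_⟩
      simp only [ZeroMemClass.coe_zero, zero_mul, add_zero]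
  | add w w' hw hw' ih ih' =>
      obtain ⟨x, y, hxI, hyI, hzeq⟩ := ih
      obtain ⟨x', y', hx'I, hy'I, hzeq'⟩ := ih'
      refine ⟨x + x', y + y', I.add_mem hxI hx'I, I.add_mem hyI hy'I, ?_⟩
      push_cast
      linear_combination hzeq + hzeq'
  | smul a w hw ih =>
      obtain ⟨x, y, hxI, hyI, hzeq⟩ := ih
      obtain ⟨r, c, hr, hc, hs⟩ := hdec ↑a a.2
      refine ⟨⟨c, hc⟩ * y + ⟨r, hr⟩ * x + ⟨c, hc⟩ * x, ⟨r, hr⟩ * y,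
        I.add_mem (I.add_mem (I.mul_mem_left _ hyI) (I.mul_mem_left _ hxI))
          (I.mul_mem_left _ hxI),
        I.mul_mem_left _ hyI, ?_⟩
      rw [smul_eq_mul]
      push_cast
      linear_combination (↑w : Amb) * hs + (r + c * e) * hzeq + (c * (↑x : Amb)) * he

lemma hpA : eplus * (1 + tauQ) = 1 + tauQ := by linear_combination hpt + twop
lemma hmA : eminus * (1 - tauQ) = 1 - tauQ := by linear_combination twom - hmt

lemma tp_mem : (1 + tauQ) ∈ RtwoSub := (mem_RtwoSub_iff _).mpr
  ⟨1, 1, one_mem _, one_mem _, by simp⟩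
lemma tm_mem : (1 - tauQ) ∈ RtwoSub := (mem_RtwoSub_iff _).mpr
  ⟨1, -1, one_mem _, neg_mem (one_mem _), by simp [sub_eq_add_neg]⟩
lemma u_mem (i : ℕ) : ((2:ℚ)^i) • (1:Amb) + ((2:ℚ)^i) • tauQ ∈ RtwoSub :=
  (mem_RtwoSub_iff _).mpr ⟨_, _, pow2_mem_Zloc i, pow2_mem_Zloc i, rfl⟩
lemma v_mem (j : ℕ) : ((2:ℚ)^j) • (1:Amb) - ((2:ℚ)^j) • tauQ ∈ RtwoSub :=
  (mem_RtwoSub_iff _).mpr ⟨(2:ℚ)^j, -((2:ℚ)^j), pow2_mem_Zloc j,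
    neg_mem (pow2_mem_Zloc j), by rw [neg_smul]; ring⟩

/-- Let `G = ⟨τ⟩` have order 2, `R₂ = ℤ_(2)[G] ⊆ S₂ = ℤ_(2)e⁺ ⊕ ℤ_(2)e⁻` with
`e^± = (1±τ)/2`.  If `I` is an ideal of `R₂` of finite index and the generator
of the (principal) extended ideal `I·S₂` is of the form `α = 2^i e⁺ + 2^j e⁻`,
then `α` lies in `I`. -/
theorem generator_of_extended_ideal_mem
    (hRS : RtwoSub ≤ StwoSub)
    (I : Ideal RtwoSub) (hfin : Finite (RtwoSub ⧸ I))
    (i j : ℕ)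
    (hα : (2 : MonoidAlgebra ℚ Gtwo) ^ i * eplus +
          (2 : MonoidAlgebra ℚ Gtwo) ^ j * eminus ∈ StwoSub)
    (hgen : Ideal.map (Subring.inclusion hRS) I =
      Ideal.span {(⟨(2 : MonoidAlgebra ℚ Gtwo) ^ i * eplus +
        (2 : MonoidAlgebra ℚ Gtwo) ^ j * eminus, hα⟩ : StwoSub)}) :
    ∃ hR : (2 : MonoidAlgebra ℚ Gtwo) ^ i * eplus +
        (2 : MonoidAlgebra ℚ Gtwo) ^ j * eminus ∈ RtwoSub,
      (⟨(2 : MonoidAlgebra ℚ Gtwo) ^ i * eplus +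
        (2 : MonoidAlgebra ℚ Gtwo) ^ j * eminus, hR⟩ : RtwoSub) ∈ I := by
  have h2powi : ((2:Amb))^i = CC ((2:ℚ)^i) := by rw [map_pow, h2]
  have h2powj : ((2:Amb))^j = CC ((2:ℚ)^j) := by rw [map_pow, h2]
  set P : Amb := CC ((2:ℚ)^i) with hP
  set Q : Amb := CC ((2:ℚ)^j) with hQ
  set αS : StwoSub := (⟨(2 : MonoidAlgebra ℚ Gtwo) ^ i * eplus +
        (2 : MonoidAlgebra ℚ Gtwo) ^ j * eminus, hα⟩ : StwoSub) with hαS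
  have hαmem : αS ∈ Ideal.map (Subring.inclusion hRS) I := by
    rw [hgen]; exact Ideal.mem_span_singleton_self _
  obtain ⟨x, y, hxI, hyI, hxy0⟩ := map_decomp hRS I eplus hpp s_decomp_plus αS hαmem
  obtain ⟨x', y', hx'I, hy'I, hxy0'⟩ := map_decomp hRS I eminus hmm s_decomp_minus αS hαmem
  have hxy : P * eplus + Q * eminus = ↑y + ↑x * eplus := by
    rw [← h2powi, ← h2powj]; exact hxy0
  have hxy' : P * eplus + Q * eminus = ↑y' + ↑x' * eminus := by
    rw [← h2powi, ← h2powj]; exact hxy0'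
  -- coordinates of x
  have hxmap : Subring.inclusion hRS x ∈ Ideal.map (Subring.inclusion hRS) I :=
    Ideal.mem_map_of_mem _ hxI
  rw [hgen, Ideal.mem_span_singleton] at hxmap
  obtain ⟨t, htt⟩ := hxmap
  have hxcoe : (x : Amb) = (↑αS : Amb) * (↑t : Amb) := by
    rw [← coe_incl hRS x, htt]; push_cast; ring
  obtain ⟨a, b, ha, hb, htcoe⟩ := (mem_StwoSub_iff (t : Amb)).mp t.2
  have hXe : (x : Amb) * eplus = P * CC a * eplus := by
    rw [hxcoe, htcoe, hsm a, hsm b, hαS]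
    show ((2:Amb)^i * eplus + (2:Amb)^j * eminus) * _ * _ = _
    rw [h2powi, h2powj]
    linear_combination (P * CC a * (eplus + 1)) * hpp +
      (P * CC b * eplus + Q * CC a * eplus + Q * CC b) * hpm + (Q * CC b * eplus) * hmm
  -- coordinates of x'
  have hxmap' : Subring.inclusion hRS x' ∈ Ideal.map (Subring.inclusion hRS) I :=
    Ideal.mem_map_of_mem _ hx'I
  rw [hgen, Ideal.mem_span_singleton] at hxmap'
  obtain ⟨t', htt'⟩ := hxmap'
  have hxcoe' : (x' : Amb) = (↑αS : Amb) * (↑t' : Amb) := by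
    rw [← coe_incl hRS x', htt']; push_cast; ring
  obtain ⟨a₂, b₂, ha₂, hb₂, htcoe'⟩ := (mem_StwoSub_iff (t' : Amb)).mp t'.2
  have hX'e : (x' : Amb) * eminus = Q * CC b₂ * eminus := by
    rw [hxcoe', htcoe', hsm a₂, hsm b₂, hαS]
    show ((2:Amb)^i * eplus + (2:Amb)^j * eminus) * _ * _ = _
    rw [h2powi, h2powj]
    linear_combination (P * CC a₂ * eplus + P * CC b₂ * eminus + Q * CC a₂ * eminus) * hpm +
      (Q * CC b₂ * (eminus + 1)) * hmm
  -- the elements u = 2^i (1+τ) and v = 2^j (1-τ) of R₂, shown to lie in I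
  set uR : RtwoSub := ⟨((2:ℚ)^i) • (1:Amb) + ((2:ℚ)^i) • tauQ, u_mem i⟩ with huR
  set vR : RtwoSub := ⟨((2:ℚ)^j) • (1:Amb) - ((2:ℚ)^j) • tauQ, v_mem j⟩ with hvR
  have huI : uR ∈ I := by
    have heq : uR = (y + x) * ⟨1 + tauQ, tp_mem⟩ := by
      apply Subtype.ext
      push_cast
      show ((2:ℚ)^i) • (1:Amb) + ((2:ℚ)^i) • tauQ = ((y:Amb) + (x:Amb)) * (1 + tauQ)
      rw [hsm, hsm, mul_one]
      linear_combination (1 + tauQ) * hxy + ((↑x : Amb) - P) * hpA - Q * hm1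
    rw [heq]
    exact I.mul_mem_right _ (I.add_mem hyI hxI)
  have hvI : vR ∈ I := by
    have heq : vR = (y' + x') * ⟨1 - tauQ, tm_mem⟩ := by
      apply Subtype.ext
      push_cast
      show ((2:ℚ)^j) • (1:Amb) - ((2:ℚ)^j) • tauQ = ((y':Amb) + (x':Amb)) * (1 - tauQ)
      rw [hsm, hsm, mul_one]
      linear_combination (1 - tauQ) * hxy' + ((↑x' : Amb) - Q) * hmA - P * hp2
    rw [heq]
    exact I.mul_mem_right _ (I.add_mem hy'I hx'I)
  -- it suffices to find an element of I whose coercion is α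
  suffices hfind : ∃ z : RtwoSub, z ∈ I ∧ (z : Amb) =
      (2 : MonoidAlgebra ℚ Gtwo) ^ i * eplus + (2 : MonoidAlgebra ℚ Gtwo) ^ j * eminus by
    obtain ⟨z, hzI, hzeq⟩ := hfind
    refine ⟨hzeq ▸ z.2, ?_⟩
    have hz2 : (⟨(2 : MonoidAlgebra ℚ Gtwo) ^ i * eplus +
        (2 : MonoidAlgebra ℚ Gtwo) ^ j * eminus, hzeq ▸ z.2⟩ : RtwoSub) = z :=
      Subtype.ext hzeq.symm
    rw [hz2]; exact hzI
  rcases Zloc_parity ha with ⟨a', ha', haa⟩ | ⟨a', ha', haa⟩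
  · -- a = 2 a'
    have hca : CC a = 2 * CC a' := by rw [haa, map_mul, map_ofNat]
    refine ⟨y + ⟨a' • (1:Amb), scal_mem_RtwoSub ha'⟩ * uR,
      I.add_mem hyI (I.mul_mem_left _ huI), ?_⟩
    push_cast
    show (y:Amb) + (a' • (1:Amb)) * (((2:ℚ)^i) • (1:Amb) + ((2:ℚ)^i) • tauQ) = _
    rw [h2powi, h2powj, hsm, hsm, hsm, mul_one]
    linear_combination -hxy - hXe - (P * eplus) * hca - (CC a' * P) * twop
  · rcases Zloc_parity hb₂ with ⟨b', hb', hbb⟩ | ⟨b', hb', hbb⟩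
    · -- b₂ = 2 b'
      have hcb : CC b₂ = 2 * CC b' := by rw [hbb, map_mul, map_ofNat]
      refine ⟨y' + ⟨b' • (1:Amb), scal_mem_RtwoSub hb'⟩ * vR,
        I.add_mem hy'I (I.mul_mem_left _ hvI), ?_⟩
      push_cast
      show (y':Amb) + (b' • (1:Amb)) * (((2:ℚ)^j) • (1:Amb) - ((2:ℚ)^j) • tauQ) = _
      rw [h2powi, h2powj, hsm, hsm, hsm, mul_one]
      linear_combination -hxy' - hX'e - (Q * eminus) * hcb - (CC b' * Q) * twom
    · -- a = 1 + 2a', b₂ = 1 + 2b'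
      have hca : CC a = 1 + 2 * CC a' := by rw [haa, map_add, map_one, map_mul, map_ofNat]
      have hcb : CC b₂ = 1 + 2 * CC b' := by rw [hbb, map_add, map_one, map_mul, map_ofNat]
      refine ⟨y + y' + ⟨a' • (1:Amb), scal_mem_RtwoSub ha'⟩ * uR +
        ⟨b' • (1:Amb), scal_mem_RtwoSub hb'⟩ * vR,
        I.add_mem (I.add_mem (I.add_mem hyI hy'I) (I.mul_mem_left _ huI))
          (I.mul_mem_left _ hvI), ?_⟩
      push_cast
      show (y:Amb) + (y':Amb) + (a' • (1:Amb)) * (((2:ℚ)^i) • (1:Amb) + ((2:ℚ)^i) • tauQ) +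
        (b' • (1:Amb)) * (((2:ℚ)^j) • (1:Amb) - ((2:ℚ)^j) • tauQ) = _
      rw [h2powi, h2powj]
      simp only [hsm, mul_one]
      linear_combination -hxy - hxy' - hXe - hX'e - (P * eplus) * hca - (Q * eminus) * hcb -
        (CC a' * P) * twop - (CC b' * Q) * twom
end

section
/- Let G = ⟨τ⟩ have order 2 and R₂ = Z_(2)[G]. Suppose M is a finite Z_(2)[G]-module such that ker(1+τ)/im(1-τ) on M has order 2. Then |M/(1-τ)M|·(1+τ)/2 ∈ Fit_{R₂}(M). -/
/-- The zeroth Fitting ideal of a module `M` over a commutative ring `A`. -/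
def fittingIdeal (A : Type*) [CommRing A] (M : Type*) [AddCommGroup M] [Module A M] :
    Ideal A :=
  ⨆ (n : ℕ) (x : Fin n → M) (_ : Submodule.span A (Set.range x) = ⊤),
    Ideal.span {d : A | ∃ B : Matrix (Fin n) (Fin n) A,
      (∀ i, ∑ j, B i j • x j = 0) ∧ d = B.det}

/-- The group ring `R₂ = ℤ_(2)[G]`. -/
abbrev Rtwo := MonoidAlgebra Zloc Gtwo

/-- The nontrivial element `τ` inside `R₂ = ℤ_(2)[G]`. -/
noncomputable def tau2 : Rtwo := MonoidAlgebra.of Zloc Gtwo (Multiplicative.ofAdd 1)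

/-!
Write `T = (1 - τ)M`. Lifts `xᵢ ∈ M` of the generators of a cyclic decomposition
`M/T ≅ ⊕ ℤ/dᵢ` generate `M` (Nakayama: `(1 - τ)² = 2(1 - τ)`, so `1 - τ` is nilpotent on the
finite 2-group `M`) and satisfy `dᵢ xᵢ ∈ (1 - τ)M`. An element `s ∈ ker(1 + τ)` not in `T`
maps to an element of order 2 of `M/T`, whose coordinate at some `i₀` is `d_{i₀}/2`; the lift
`∑ wⱼ xⱼ` of that image differs from `s` by an element of `T`, so it is killed by `1 + τ`.
Putting this relation in row `i₀` of the diagonal relation matrix, the determinant is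
`(1 + τ)(d_{i₀}/2)∏_{j ≠ i₀} dⱼ = |M/T|(1 + τ)/2`, because `(1 + τ)(1 - τ) = 0` kills the
`(1 - τ)`-parts of the other rows.
-/

open Finset Matrix

theorem Matrix.det_updateRow_diagonal {n R : Type*} [DecidableEq n] [Fintype n] [CommRing R]
    (d v : n → R) (i : n) :
    ((diagonal d).updateRow i v).det = v i * ∏ j ∈ univ.erase i, d j := by
  rw [det_eq_sum_mul_adjugate_row _ i, Finset.sum_eq_single i]
  · rw [adjugate_apply, updateRow_idem, ← adjugate_apply, adjugate_diagonal, updateRow_self,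
      diagonal_apply_eq]
  · intro j _ hj
    rw [adjugate_apply, updateRow_idem, ← adjugate_apply, adjugate_diagonal,
      diagonal_apply_ne _ hj, mul_zero]
  · simp

theorem Matrix.det_sub_det_mem {n R : Type*} [DecidableEq n] [Fintype n] [CommRing R]
    {I : Ideal R} {B B' : Matrix n n R} (h : ∀ i j, B i j - B' i j ∈ I) :
    B.det - B'.det ∈ I := by
  rw [← Ideal.Quotient.eq, RingHom.map_det, RingHom.map_det]
  congr 1
  ext i j
  exact Ideal.Quotient.eq.mpr (h i j)

theorem det_mem_fittingIdeal {A M ι : Type*} [CommRing A] [AddCommGroup M] [Module A M]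
    [Fintype ι] [DecidableEq ι] {x : ι → M} (hx : Submodule.span A (Set.range x) = ⊤)
    {B : Matrix ι ι A} (hB : ∀ i, ∑ j, B i j • x j = 0) : B.det ∈ fittingIdeal A M := by
  let e := (Fintype.equivFin ι).symm
  have hspan : Submodule.span A (Set.range (x ∘ e)) = ⊤ := by
    rwa [e.surjective.range_comp]
  have hrel : ∀ i, ∑ j, B.submatrix e e i j • (x ∘ e) j = 0 := fun i =>
    (e.sum_comp fun j => B (e i) j • x j).trans (hB (e i))
  have hle : Ideal.span {d | ∃ C : Matrix _ _ A, (∀ i, ∑ j, C i j • (x ∘ e) j = 0) ∧ d = C.det}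
      ≤ fittingIdeal A M :=
    le_iSup_of_le _ (le_iSup_of_le _ (le_iSup_of_le hspan le_rfl))
  rw [← det_submatrix_equiv_self e]
  exact hle (Ideal.subset_span ⟨_, hrel, rfl⟩)

theorem mul_prod_mem_fittingIdeal {A M ι : Type*} [CommRing A] [AddCommGroup M] [Module A M]
    [Fintype ι] [DecidableEq ι] {s t : A} (hst : s * t = 0) {x : ι → M}
    (hx : Submodule.span A (Set.range x) = ⊤) {d w : ι → A}
    (hd : ∀ i, ∃ m, d i • x i = t • m) (hw : s • ∑ j, w j • x j = 0) (i₀ : ι) :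
    s * (w i₀ * ∏ j ∈ univ.erase i₀, d j) ∈ fittingIdeal A M := by
  choose m hm using hd
  choose C hC using fun i =>
    (Submodule.mem_span_range_iff_exists_fun A).mp (hx ▸ Submodule.mem_top : m i ∈ _)
  let D : Matrix ι ι A := diagonal d - t • of C
  have hD : ∀ i, ∑ j, D i j • x j = 0 := fun i =>
    calc ∑ j, D i j • x j = d i • x i - t • ∑ j, C i j • x j := by
          simp [D, Matrix.sub_apply, diagonal_apply, sub_smul, sum_sub_distrib, ite_smul, mul_smul,
            smul_sum]
      _ = 0 := by rw [hC, hm, sub_self]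
  have hrel : ∀ i, ∑ j, (D.updateRow i₀ (s • w)) i j • x j = 0 := fun i => by
    rcases eq_or_ne i i₀ with rfl | hi
    · simpa only [updateRow_self, Pi.smul_apply, smul_eq_mul, mul_smul, ← smul_sum] using hw
    · simpa only [updateRow_ne hi] using hD i
  have hdet : (D.updateRow i₀ w).det - ((diagonal d).updateRow i₀ w).det ∈ Ideal.span {t} :=
    det_sub_det_mem fun i j => by
      rcases eq_or_ne i i₀ with rfl | hi
      · simp
      · simp [updateRow_ne hi, D, Ideal.mem_span_singleton]
  obtain ⟨c, hc⟩ := Ideal.mem_span_singleton'.mp hdet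
  have key : (D.updateRow i₀ (s • w)).det = s * (w i₀ * ∏ j ∈ univ.erase i₀, d j) := by
    rw [det_updateRow_smul, ← det_updateRow_diagonal, ← sub_eq_zero, ← mul_sub, ← hc,
      mul_left_comm, hst, mul_zero]
  exact key ▸ det_mem_fittingIdeal hx hrel

theorem Submodule.eq_top_of_sup_range_smul_eq_top {A M : Type*} [CommRing A] [AddCommGroup M]
    [Module A M] {t : A} {n : ℕ} (ht : ∀ m : M, t ^ n • m = 0) {N : Submodule A M}
    (h : N ⊔ LinearMap.range (t • LinearMap.id) = ⊤) : N = ⊤ := by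
  have approx : ∀ k, ∀ m : M, ∃ ξ ∈ N, ∃ m', m = ξ + t ^ k • m' := by
    intro k
    induction k with
    | zero => exact fun m => ⟨0, N.zero_mem, m, by simp⟩
    | succ k ih =>
      intro m
      obtain ⟨ξ, hξ, m', rfl⟩ := ih m
      obtain ⟨η, hη, _, ⟨u, rfl⟩, rfl⟩ := Submodule.mem_sup.mp (h ▸ Submodule.mem_top : m' ∈ _)
      refine ⟨ξ + t ^ k • η, N.add_mem hξ (N.smul_mem _ hη), u, ?_⟩
      simp only [LinearMap.smul_apply, LinearMap.id_apply, smul_add, smul_smul, ← pow_succ]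
      abel
  refine eq_top_iff'.mpr fun m => ?_
  obtain ⟨ξ, hξ, m', rfl⟩ := approx n m
  simpa [ht] using hξ

theorem Module.exists_two_pow_smul_eq_zero {A : Type*} [Ring A]
    (hA : ∀ n : ℕ, Odd n → IsUnit (n : A)) (M : Type*) [AddCommGroup M] [Module A M] [Finite M] :
    ∃ e : ℕ, ∀ m : M, (2 : A) ^ e • m = 0 := by
  obtain ⟨e, q, hq, hcard⟩ := Nat.exists_eq_two_pow_mul_odd (Nat.card_pos (α := M)).ne'
  refine ⟨e, fun m => (hA q hq).smul_left_cancel.mp ?_⟩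
  rw [smul_zero, smul_smul, ← Nat.cast_ofNat, ← Nat.cast_pow, ← Nat.cast_mul, mul_comm,
    ← hcard, Nat.cast_smul_eq_nsmul, card_nsmul_eq_zero']

theorem ZMod.two_mul_val_eq_of_add_self_eq_zero {n : ℕ} {a : ZMod n} (ha : a ≠ 0)
    (h : a + a = 0) : 2 * a.val = n := by
  rcases n with _ | n
  · exact absurd (by simpa [← two_mul] using h) ha
  · have hdvd : n + 1 ∣ 2 * a.val := by
      rw [← ZMod.natCast_eq_zero_iff]
      simpa [two_mul] using h
    have hpos : 0 < a.val := Nat.pos_of_ne_zero ((ZMod.val_ne_zero a).mpr ha)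
    obtain ⟨c, hc⟩ := hdvd
    have := ZMod.val_lt a
    obtain rfl : c = 1 := by nlinarith
    simpa using hc

theorem AddCommGroup.exists_generators_of_two_nsmul_eq_zero {N : Type*} [AddCommGroup N]
    [Finite N] {y : N} (hy : y ≠ 0) (h2y : 2 • y = 0) :
    ∃ (ι : Type) (_ : Fintype ι) (g : ι → N) (d w : ι → ℕ) (i₀ : ι),
      AddSubgroup.closure (Set.range g) = ⊤ ∧ (∀ i, d i • g i = 0) ∧
      Nat.card N = ∏ i, d i ∧ y = ∑ j, w j • g j ∧ 2 * w i₀ = d i₀ := by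
  classical
  obtain ⟨ι, _, p, hp, e, ⟨φ⟩⟩ := AddCommGroup.equiv_directSum_zmod_of_finite N
  let d i := p i ^ e i
  have : ∀ i, NeZero (d i) := fun i => ⟨pow_ne_zero _ (hp i).ne_zero⟩
  let g i := φ.symm (DirectSum.of (fun i => ZMod (d i)) i 1)
  have hrep : ∀ z : N, z = ∑ j, (φ z j).val • g j := fun z => φ.injective <| by
    simp only [g, map_sum, AddEquiv.apply_symm_apply, ← map_nsmul, nsmul_one,
      ZMod.natCast_zmod_val]
    exact (DirectSum.sum_univ_of _).symm
  obtain ⟨i₀, hi₀⟩ : ∃ i, φ y i ≠ 0 := by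
    by_contra! h
    exact hy (φ.injective (by ext i; simp [h]))
  refine ⟨ι, inferInstance, g, d, fun j => (φ y j).val, i₀, ?_, fun i => ?_, ?_, hrep y,
    ZMod.two_mul_val_eq_of_add_self_eq_zero hi₀ ?_⟩
  · exact (AddSubgroup.eq_top_iff' _).mpr fun z => hrep z ▸ AddSubgroup.sum_mem _ fun j _ =>
      AddSubgroup.nsmul_mem _ (AddSubgroup.subset_closure (Set.mem_range_self j)) _
  · rw [← map_nsmul, ← map_nsmul, nsmul_one, ZMod.natCast_self, map_zero, map_zero]
  · rw [Nat.card_congr (φ.toEquiv.trans DFinsupp.equivFunOnFintype), Nat.card_pi]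
    exact prod_congr rfl fun i _ => Nat.card_zmod _
  · simpa [two_nsmul] using congr($(congrArg φ h2y) i₀)

theorem AddSubgroup.exists_mem_notMem_two_nsmul_mem {G : Type*} [AddGroup G] [Finite G]
    {H K : AddSubgroup G} (hHK : H ≤ K) (hcard : Nat.card K = 2 * Nat.card H) :
    ∃ g ∈ K, g ∉ H ∧ 2 • g ∈ H := by
  have hindex : H.relIndex K = 2 := by
    have := AddSubgroup.relIndex_mul_relIndex ⊥ H K bot_le hHK
    rw [AddSubgroup.relIndex_bot_left, AddSubgroup.relIndex_bot_left, hcard, mul_comm] at this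
    exact Nat.eq_of_mul_eq_mul_right Nat.card_pos this
  obtain ⟨g, hgK, hgH, hg⟩ := AddSubgroup.relIndex_eq_two_iff_exists_notMem_and.mp hindex
  exact ⟨g, hgK, hgH, two_nsmul g ▸ (hg g hgK).resolve_right hgH⟩

theorem tau2_mul_self : tau2 * tau2 = 1 := by
  rw [tau2, ← map_mul, ← ofAdd_add, show (1 + 1 : ZMod 2) = 0 by decide, ofAdd_zero, map_one]

theorem one_add_tau2_mul_one_sub_tau2 : (1 + tau2) * (1 - tau2) = 0 := by
  linear_combination -tau2_mul_self

theorem one_sub_tau2_pow_succ (k : ℕ) : (1 - tau2) ^ (k + 1) = 2 ^ k * (1 - tau2) := by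
  induction k with
  | zero => simp
  | succ k ih => linear_combination (1 - tau2) * ih + 2 ^ k * tau2_mul_self

theorem Zloc.isUnit_intCast_of_not_two_dvd {n : ℤ} (hn : ¬ 2 ∣ n) : IsUnit (n : Zloc) := by
  have hn0 : (n : ℚ) ≠ 0 := by exact_mod_cast fun h : n = 0 => hn (h ▸ dvd_zero 2)
  have hinv : (n : ℚ)⁻¹ ∈ Zloc := Subring.subset_closure ⟨n, hn, inv_mul_cancel₀ hn0⟩
  exact .of_mul_eq_one ⟨_, hinv⟩ (Subtype.ext (mul_inv_cancel₀ hn0))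

theorem Rtwo.isUnit_natCast_of_odd {n : ℕ} (hn : Odd n) : IsUnit (n : Rtwo) := by
  have hn' : ¬ 2 ∣ (n : ℤ) := by exact_mod_cast hn.not_two_dvd_nat
  simpa using (Zloc.isUnit_intCast_of_not_two_dvd hn').map (algebraMap Zloc Rtwo)

theorem Rtwo.two_mul_injective : Function.Injective ((2 : Rtwo) * ·) := by
  have := IsAddTorsionFree.of_isTorsionFree Zloc Rtwo
  intro a b h
  simp only [two_mul, ← two_nsmul] at h
  exact nsmul_right_injective two_ne_zero h

section

variable {M : Type*} [AddCommGroup M] [Module Rtwo M]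

theorem one_add_tau2_smul_eq_zero_of_mem_range {m : M}
    (hm : m ∈ LinearMap.range ((1 - tau2) • LinearMap.id : M →ₗ[Rtwo] M)) :
    (1 + tau2) • m = 0 := by
  obtain ⟨y, rfl⟩ := hm
  simp [smul_smul, one_add_tau2_mul_one_sub_tau2]

theorem exists_one_sub_tau2_pow_smul_eq_zero [Finite M] :
    ∃ n : ℕ, ∀ m : M, (1 - tau2) ^ n • m = 0 := by
  obtain ⟨e, he⟩ := Module.exists_two_pow_smul_eq_zero (fun _ => Rtwo.isUnit_natCast_of_odd) M
  exact ⟨e + 1, fun m => by rw [one_sub_tau2_pow_succ, mul_comm, mul_smul, he, smul_zero]⟩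

theorem span_eq_top_of_closure_mkQ_eq_top [Finite M] {ι : Type*} {x : ι → M}
    (hx : AddSubgroup.closure (Set.range
      ((LinearMap.range ((1 - tau2) • LinearMap.id : M →ₗ[Rtwo] M)).mkQ ∘ x)) = ⊤) :
    Submodule.span Rtwo (Set.range x) = ⊤ := by
  obtain ⟨n, hn⟩ := exists_one_sub_tau2_pow_smul_eq_zero (M := M)
  refine Submodule.eq_top_of_sup_range_smul_eq_top hn ?_
  rw [sup_comm, ← Submodule.map_mkQ_eq_top, Submodule.map_span, ← Set.range_comp]
  refine Submodule.eq_top_iff'.mpr fun z => ?_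
  have hz : z ∈ AddSubgroup.closure _ := hx ▸ AddSubgroup.mem_top z
  exact (AddSubgroup.closure_le (K := (Submodule.span Rtwo _).toAddSubgroup)).mpr
    Submodule.subset_span hz

theorem exists_mem_ker_one_add_tau2_notMem_range [Finite M]
    (hcoh : Nat.card {m : M // (1 + tau2) • m = 0} =
      2 * Nat.card (Set.range fun m : M => (1 - tau2) • m)) :
    ∃ s : M, (1 + tau2) • s = 0 ∧
      s ∉ LinearMap.range ((1 - tau2) • LinearMap.id : M →ₗ[Rtwo] M) ∧
      2 • s ∈ LinearMap.range ((1 - tau2) • LinearMap.id : M →ₗ[Rtwo] M) := by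
  let T := LinearMap.range ((1 - tau2) • LinearMap.id : M →ₗ[Rtwo] M)
  let K := LinearMap.ker ((1 + tau2) • LinearMap.id : M →ₗ[Rtwo] M)
  have hTK : T.toAddSubgroup ≤ K.toAddSubgroup := fun m hm => by
    simpa [K] using one_add_tau2_smul_eq_zero_of_mem_range hm
  have hcK : Nat.card K.toAddSubgroup = Nat.card {m : M // (1 + tau2) • m = 0} :=
    Nat.card_congr (Equiv.subtypeEquivRight fun m => by simp [K])
  have hcT : Nat.card T.toAddSubgroup = Nat.card (Set.range fun m : M => (1 - tau2) • m) :=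
    Nat.card_congr (Equiv.subtypeEquivRight fun m => by simp [T])
  obtain ⟨s, hsK, hsT, h2s⟩ :=
    AddSubgroup.exists_mem_notMem_two_nsmul_mem hTK (by rw [hcK, hcT, hcoh])
  exact ⟨s, by simpa [K] using hsK, hsT, h2s⟩

end

/-- Let `G = ⟨τ⟩` have order 2, `R₂ = ℤ_(2)[G]`, and `M` a finite
`R₂`-module such that `ker(1+τ)/im(1-τ)` on `M` has order 2.  Then the element
`|M/(1-τ)M|·(1+τ)/2` of `R₂` (the unique `r` with `2r = |M/(1-τ)M|·(1+τ)`,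
which exists since `|M/(1-τ)M|` is even) belongs to `Fit_{R₂}(M)`. -/
theorem half_card_coinvariants_mul_one_add_tau_mem_fittingIdeal
    (M : Type*) [AddCommGroup M] [Module Rtwo M] [Finite M]
    (hcoh : Nat.card {m : M // (1 + tau2) • m = 0} =
      2 * Nat.card (Set.range fun m : M => (1 - tau2) • m)) :
    ∀ r : Rtwo,
      2 * r = (Nat.card (M ⧸ LinearMap.range
          ((1 - tau2) • (LinearMap.id : M →ₗ[Rtwo] M))) : Rtwo) * (1 + tau2) →
        r ∈ fittingIdeal Rtwo M := by
  classical
  intro r hr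
  set T := LinearMap.range ((1 - tau2) • LinearMap.id : M →ₗ[Rtwo] M)
  obtain ⟨s, hs, hsT, h2s⟩ := exists_mem_ker_one_add_tau2_notMem_range hcoh
  have : Finite (M ⧸ T) := Quotient.finite _
  obtain ⟨ι, _, g, d, w, i₀, hg, hd, hcard, hsw, hw⟩ :=
    AddCommGroup.exists_generators_of_two_nsmul_eq_zero (y := T.mkQ s)
      (by rwa [Submodule.mkQ_apply, Ne, Submodule.Quotient.mk_eq_zero])
      (by rwa [← map_nsmul, Submodule.mkQ_apply, Submodule.Quotient.mk_eq_zero])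
  choose x hx using fun i => T.mkQ_surjective (g i)
  have hspan : Submodule.span Rtwo (Set.range x) = ⊤ :=
    span_eq_top_of_closure_mkQ_eq_top (by rwa [show T.mkQ ∘ x = g from funext hx])
  have hdrel : ∀ i, ∃ m, (d i : Rtwo) • x i = (1 - tau2) • m := fun i => by
    obtain ⟨m, hm⟩ : (d i : Rtwo) • x i ∈ T := by
      rw [← Submodule.Quotient.mk_eq_zero, Submodule.Quotient.mk_smul, Nat.cast_smul_eq_nsmul]
      exact (congrArg _ (hx i)).trans (hd i)
    exact ⟨m, hm.symm⟩
  have hwrel : (1 + tau2) • ∑ j, (w j : Rtwo) • x j = 0 := by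
    have hmem : ∑ j, (w j : Rtwo) • x j - s ∈ T := by
      rw [← Submodule.Quotient.mk_eq_zero, ← Submodule.mkQ_apply, map_sub, map_sum, hsw]
      simp only [Nat.cast_smul_eq_nsmul, map_nsmul, hx, sub_self]
    rw [← sub_add_cancel (∑ j, (w j : Rtwo) • x j) s, smul_add,
      one_add_tau2_smul_eq_zero_of_mem_range hmem, hs, add_zero]
  convert mul_prod_mem_fittingIdeal one_add_tau2_mul_one_sub_tau2 hspan hdrel hwrel i₀ using 1
  apply Rtwo.two_mul_injective
  beta_reduce
  rw [hr, hcard, ← mul_prod_erase univ d (mem_univ i₀), ← hw]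
  push_cast
  ring
end
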